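/- Let X be a finite-dimensional CAT(0) cubical complex with Roller compactification X̄, basepoint o, and horofunctions h_x(a) = d(o,a) − 2(a|x)_o. Then for every g ∈ Aut(X), every x, y ∈ X̄, and with the group acting on X̄: h_x(g⁻¹o) = −2(x | g⁻¹y)_o + 2(gx | y)_o + h_y(go). -/

import Mathlib

/-!
The Roller compactification of a finite-dimensional CAT(0) cubical complex,
modeled via ultrafilters on the pocset `H` of half-spaces (involution
`c : h ↦ h*`).  An automorphism is a bijection `g : H ≃ H` commuting with `c`;
it acts on points by taking images of ultrafilters.  `o` is a vertex (its
`g`- and `g⁻¹`-translates are at finite distance), `x, y` arbitrary points of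
`X̄`; the horofunction based at `o` is `h_x(a) = d(o,a) − 2 (a|x)_o` with
`(a|x)_o = d(o, m(a,x,o))`.  As in the source, all the quantities occurring in
the identity are assumed finite.
-/

open Set

/-- the median -/
def med {H : Type*} (A B C : Set H) : Set H := (A ∩ B) ∪ (B ∩ C) ∪ (C ∩ A)

/-- the combinatorial distance `d(a,b) = |U_a \ U_b| (= ½|U_a △ U_b|)` -/
noncomputable def dd {H : Type*} (A B : Set H) : ℕ := (A \ B).ncard

/-- the action of an automorphism on a point of the Roller compactification -/
def ptE {H : Type*} (e : H ≃ H) (U : Set H) : Set H := ⇑e '' U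

open Function

/-!
Transport everything by `g`: with `a = g o`, `b = o` and `x' = g x`, the identity becomes the
cocycle relation `h^a_{x'}(b) - h^b_y(a) = 2 (x'|y)_b - 2 (x'|y)_a` between horofunctions based
at two vertices. Splitting the half-spaces counted by `(x'|y)_a` and `(x'|y)_b` according to
whether they contain `b`, resp. `a`, the common part cancels, and what remains is matched
bijectively by the involution `h ↦ h*`, which exchanges `a \ b` and `b \ a`.
-/

section

variable {H : Type*}

def IsOrientation (c : H → H) (U : Set H) : Prop := ∀ h, h ∈ U ↔ c h ∉ U

/-- The Gromov product `(a|b)_p`. -/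
noncomputable def gromov (p a b : Set H) : ℕ := dd p (med a b p)

/-- The horofunction `h_x(a) = d(o,a) - 2 (a|x)_o` based at `o`. -/
noncomputable def horo (o x a : Set H) : ℤ := dd o a - 2 * gromov o a x

theorem diff_med_self (p a b : Set H) : p \ med a b p = (p \ a) \ b := by
  ext h
  simp only [med, mem_sdiff, mem_union, mem_inter_iff]
  tauto

theorem gromov_eq_ncard (p a b : Set H) : gromov p a b = ((p \ a) \ b).ncard := by
  rw [gromov, dd, diff_med_self]

section Involution

variable {c : H → H}

theorem IsOrientation.preimage_eq_compl (hc : Involutive c) {U : Set H}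
    (hU : IsOrientation c U) : c ⁻¹' U = Uᶜ := by
  ext h
  rw [mem_preimage, hU, hc h, mem_compl_iff]

theorem Function.Involutive.ncard_preimage (hc : Involutive c) (S : Set H) :
    (c ⁻¹' S).ncard = S.ncard :=
  ncard_preimage_of_injective_subset_range hc.injective (by simp [hc.surjective.range_eq])

variable {a b x y : Set H}

theorem IsOrientation.preimage_diff (hc : Involutive c) (ha : IsOrientation c a)
    (hb : IsOrientation c b) : c ⁻¹' (a \ b) = b \ a := by
  rw [preimage_sdiff, ha.preimage_eq_compl hc, hb.preimage_eq_compl hc, compl_sdiff_compl]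

theorem IsOrientation.ncard_diff_comm (hc : Involutive c) (ha : IsOrientation c a)
    (hb : IsOrientation c b) : (a \ b).ncard = (b \ a).ncard := by
  rw [← hc.ncard_preimage, ha.preimage_diff hc hb]

theorem IsOrientation.finite_diff_symm (hc : Involutive c) (ha : IsOrientation c a)
    (hb : IsOrientation c b) (hab : (a \ b).Finite) : (b \ a).Finite :=
  ha.preimage_diff hc hb ▸ hab.preimage hc.injective.injOn

theorem horo_sub_horo (hc : Involutive c) (ha : IsOrientation c a) (hb : IsOrientation c b)
    (hx : IsOrientation c x) (hy : IsOrientation c y)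
    (hab : (a \ b).Finite) (hbxy : ((b \ x) \ y).Finite) :
    horo a x b - horo b y a = 2 * gromov b x y - 2 * gromov a x y := by
  have hba : (b \ a).Finite := ha.finite_diff_symm hc hb hab
  have haxy : ((a \ x) \ y).Finite :=
    (hab.union hbxy).subset fun h ⟨⟨ha, hx⟩, hy⟩ => by by_cases hb : h ∈ b <;> simp_all
  have h_ab : (a \ b).ncard = (b \ a).ncard := ha.ncard_diff_comm hc hb
  have h_abxy : ((a \ b) \ x ∩ y).ncard = ((b \ a) \ y ∩ x).ncard := by
    rw [← hc.ncard_preimage]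
    simp only [preimage_inter, preimage_sdiff, ha.preimage_eq_compl hc, hb.preimage_eq_compl hc,
      hx.preimage_eq_compl hc, hy.preimage_eq_compl hc]
    congr 1
    ext h
    simp only [mem_inter_iff, mem_sdiff, mem_compl_iff]
    tauto
  have h_axy := ncard_inter_add_ncard_sdiff_eq_ncard ((a \ x) \ y) b haxy
  have h_bxy := ncard_inter_add_ncard_sdiff_eq_ncard ((b \ x) \ y) a hbxy
  have h_abx := ncard_inter_add_ncard_sdiff_eq_ncard ((a \ b) \ x) y (hab.subset fun _ h => h.1)
  have h_bay := ncard_inter_add_ncard_sdiff_eq_ncard ((b \ a) \ y) x (hba.subset fun _ h => h.1)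
  have h_common : (a \ x) \ y ∩ b = (b \ x) \ y ∩ a := by
    ext h; simp only [mem_inter_iff, mem_sdiff]; tauto
  have h_axyb : ((a \ x) \ y) \ b = ((a \ b) \ x) \ y := by
    ext h; simp only [mem_sdiff]; tauto
  have h_bxya : ((b \ x) \ y) \ a = ((b \ a) \ y) \ x := by
    ext h; simp only [mem_sdiff]; tauto
  rw [h_common, h_axyb] at h_axy
  rw [h_bxya] at h_bxy
  simp only [horo, gromov_eq_ncard, dd]
  omega

end Involution

theorem ptE_med (e : H ≃ H) (A B C : Set H) :
    ptE e (med A B C) = med (ptE e A) (ptE e B) (ptE e C) := by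
  simp only [ptE, med, image_union, image_inter e.injective]

theorem ptE_ptE_symm (e : H ≃ H) (U : Set H) : ptE e (ptE e.symm U) = U :=
  e.image_symm_image U

theorem dd_ptE (e : H ≃ H) (A B : Set H) : dd (ptE e A) (ptE e B) = dd A B := by
  rw [dd, ptE, ptE, ← image_sdiff e.injective, ncard_image_of_injective _ e.injective, dd]

theorem gromov_ptE (e : H ≃ H) (p a b : Set H) :
    gromov (ptE e p) (ptE e a) (ptE e b) = gromov p a b := by
  rw [gromov, ← ptE_med, dd_ptE, gromov]

theorem horo_ptE (e : H ≃ H) (o x a : Set H) :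
    horo (ptE e o) (ptE e x) (ptE e a) = horo o x a := by
  rw [horo, dd_ptE, gromov_ptE, horo]

theorem IsOrientation.ptE {c : H → H} {e : H ≃ H} (he : ∀ h, e (c h) = c (e h)) {U : Set H}
    (hU : IsOrientation c U) : IsOrientation c (ptE e U) := by
  have he_symm : ∀ h, e.symm (c h) = c (e.symm h) := fun h => by
    rw [Equiv.symm_apply_eq, he, Equiv.apply_symm_apply]
  intro h
  simp only [_root_.ptE, e.image_eq_preimage_symm, mem_preimage, he_symm]
  exact hU _

end

theorem stmt14_general {H : Type*} (c : H → H) (hc : ∀ h, c (c h) = h)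
    (g : H ≃ H) (hequiv : ∀ h, g (c h) = c (g h))
    (Uo Ux Uy : Set H)
    (ho : ∀ h, h ∈ Uo ↔ c h ∉ Uo)
    (hx : ∀ h, h ∈ Ux ↔ c h ∉ Ux)
    (hy : ∀ h, h ∈ Uy ↔ c h ∉ Uy)
    (hgo : (ptE g Uo \ Uo).Finite)
    (hfin₂ : (Uo \ med (ptE g Ux) Uy Uo).Finite) :
    (dd Uo (ptE g.symm Uo) : ℝ)
        - 2 * (dd Uo (med (ptE g.symm Uo) Ux Uo) : ℝ) =
      -2 * (dd Uo (med Ux (ptE g.symm Uy) Uo) : ℝ)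
        + 2 * (dd Uo (med (ptE g Ux) Uy Uo) : ℝ)
        + ((dd Uo (ptE g Uo) : ℝ)
            - 2 * (dd Uo (med (ptE g Uo) Uy Uo) : ℝ)) := by
  have cocycle := horo_sub_horo hc (IsOrientation.ptE hequiv ho) ho (IsOrientation.ptE hequiv hx)
    hy hgo (diff_med_self Uo _ _ ▸ hfin₂)
  have h_horo : horo Uo Ux (ptE g.symm Uo) = horo (ptE g Uo) (ptE g Ux) Uo := by
    rw [← horo_ptE g, ptE_ptE_symm]
  have h_gromov : gromov Uo Ux (ptE g.symm Uy) = gromov (ptE g Uo) (ptE g Ux) Uy := by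
    rw [← gromov_ptE g, ptE_ptE_symm]
  have key : horo Uo Ux (ptE g.symm Uo) = -2 * gromov Uo Ux (ptE g.symm Uy)
      + 2 * gromov Uo (ptE g Ux) Uy + horo Uo Uy (ptE g Uo) := by
    omega
  simp only [horo, gromov] at key
  exact_mod_cast key

/-- For every automorphism `g` and all points `x, y` of the
Roller compactification,
`h_x(g⁻¹o) = −2 (x | g⁻¹y)_o + 2 (g x | y)_o + h_y(g o)`. -/
theorem stmt14 {H : Type*} (c : H → H) (hc : ∀ h, c (c h) = h)
    (g : H ≃ H) (hequiv : ∀ h, g (c h) = c (g h))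
    (Uo Ux Uy : Set H)
    (ho : ∀ h, h ∈ Uo ↔ c h ∉ Uo)
    (hx : ∀ h, h ∈ Ux ↔ c h ∉ Ux)
    (hy : ∀ h, h ∈ Uy ↔ c h ∉ Uy)
    (hgo : (ptE g Uo \ Uo).Finite) (hog : (Uo \ ptE g Uo).Finite)
    (hgo' : (ptE g.symm Uo \ Uo).Finite) (hog' : (Uo \ ptE g.symm Uo).Finite)
    (hfin₁ : (Uo \ med Ux (ptE g.symm Uy) Uo).Finite)
    (hfin₂ : (Uo \ med (ptE g Ux) Uy Uo).Finite) :
    (dd Uo (ptE g.symm Uo) : ℝ)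
        - 2 * (dd Uo (med (ptE g.symm Uo) Ux Uo) : ℝ) =
      -2 * (dd Uo (med Ux (ptE g.symm Uy) Uo) : ℝ)
        + 2 * (dd Uo (med (ptE g Ux) Uy Uo) : ℝ)
        + ((dd Uo (ptE g Uo) : ℝ)
            - 2 * (dd Uo (med (ptE g Uo) Uy Uo) : ℝ)) :=
  stmt14_general c hc g hequiv Uo Ux Uy ho hx hy hgo hfin₂
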